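/- Let (X,d) be a metric space in which every open ball B(x,r) is relatively compact, and suppose there exists C ≥ 1 such that d_ε(x,y) ≤ C d(x,y) for all ε > 0 and all x,y ∈ X. Then for every x,y ∈ X the limit ρ(x,y) := lim_{ε↓0} d_ε(x,y) exists (the function ε ↦ d_ε(x,y) being non-increasing in ε), ρ is a metric on X satisfying d(x,y) ≤ ρ(x,y) ≤ C d(x,y) for all x,y ∈ X, and the metric space (X,ρ) is complete. -/

import Mathlib

open Metric ENNReal

/-- The `ε`-chain metric `d_ε` associated with a distance function `ρ`:
the infimum of total lengths of `ε`-chains from `x` to `y` (infimum of the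
empty set being `∞`). -/
noncomputable def chainDist {X : Type*} (ρ : X → X → ℝ) (ε : ℝ) (x y : X) : ℝ≥0∞ :=
  ⨅ c : {c : ℕ × (ℕ → X) // 0 < c.1 ∧ c.2 0 = x ∧ c.2 c.1 = y ∧
      ∀ i < c.1, ρ (c.2 i) (c.2 (i + 1)) < ε},
    ∑ i ∈ Finset.range c.val.1, ENNReal.ofReal (ρ (c.val.2 i) (c.val.2 (i + 1)))

/-- `ρ : X → X → ℝ` is a metric on `X`. -/
def IsMetricDist {X : Type*} (ρ : X → X → ℝ) : Prop :=
  (∀ x y, ρ x y = ρ y x) ∧ (∀ x y, ρ x y = 0 ↔ x = y) ∧ (∀ x y z, ρ x z ≤ ρ x y + ρ y z)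

/-!
Since `d_ε(x, y)` can only grow as `ε` shrinks, its limit as `ε ↓ 0` is the supremum over `ε > 0`.
Reversing and concatenating chains shows that every `d_ε` is symmetric and satisfies the triangle
inequality, and both properties pass to the supremum. The triangle inequality of `d` gives
`d ≤ d_ε`, and the chain condition gives `d_ε ≤ C d`; hence `ρ` is a metric equivalent to `d`.
Relatively compact balls make `(X, d)` proper, hence complete, and a metric equivalent to a
complete one is complete.
-/

open Filter Topology Finset

section ChainDist

variable {X : Type*} {ρ : X → X → ℝ} {ε : ℝ} {x y : X}

lemma chainDist_le_sum {N : ℕ} {f : ℕ → X} (hN : 0 < N) (h0 : f 0 = x) (hfN : f N = y)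
    (hf : ∀ i < N, ρ (f i) (f (i + 1)) < ε) :
    chainDist ρ ε x y ≤ ∑ i ∈ range N, ENNReal.ofReal (ρ (f i) (f (i + 1))) :=
  iInf_le_of_le ⟨(N, f), hN, h0, hfN, hf⟩ le_rfl

lemma le_chainDist {b : ℝ≥0∞}
    (h : ∀ (N : ℕ) (f : ℕ → X), 0 < N → f 0 = x → f N = y → (∀ i < N, ρ (f i) (f (i + 1)) < ε) →
      b ≤ ∑ i ∈ range N, ENNReal.ofReal (ρ (f i) (f (i + 1)))) :
    b ≤ chainDist ρ ε x y :=
  le_iInf fun ⟨(N, f), hN, h0, hfN, hf⟩ => h N f hN h0 hfN hf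

lemma chainDist_antitone (ρ : X → X → ℝ) (x y : X) : Antitone fun ε => chainDist ρ ε x y :=
  fun _ _ hε => le_chainDist fun _ _ hN h0 hfN hf =>
    chainDist_le_sum hN h0 hfN fun i hi => (hf i hi).trans_le hε

lemma chainDist_triangle (ρ : X → X → ℝ) (ε : ℝ) (x y z : X) :
    chainDist ρ ε x z ≤ chainDist ρ ε x y + chainDist ρ ε y z := by
  refine ENNReal.le_iInf_add_iInf fun c₁ c₂ => ?_
  obtain ⟨⟨N, f⟩, hN, hf0, hfN, hf⟩ := c₁
  obtain ⟨⟨M, g⟩, hM, hg0, hgM, hg⟩ := c₂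
  dsimp only at hN hf0 hfN hf hM hg0 hgM hg ⊢
  set h : ℕ → X := fun i => if i ≤ N then f i else g (i - N)
  have h_left : ∀ i ≤ N, h i = f i := fun i hi => if_pos hi
  have h_right : ∀ i, h (N + i) = g i := by
    rintro (_ | i)
    · simp [h, hfN, hg0]
    · simp [h]
  have h_step : ∀ i, h (N + i + 1) = g (i + 1) := fun i => h_right (i + 1)
  calc chainDist ρ ε x z ≤ ∑ i ∈ range (N + M), ENNReal.ofReal (ρ (h i) (h (i + 1))) := by
        refine chainDist_le_sum (by omega) (by rw [h_left 0 (by omega), hf0])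
          (by rw [h_right, hgM]) fun i hi => ?_
        rcases lt_or_ge i N with hiN | hiN
        · rw [h_left i hiN.le, h_left (i + 1) hiN]
          exact hf i hiN
        · obtain ⟨j, rfl⟩ := Nat.exists_eq_add_of_le hiN
          rw [h_right, h_step]
          exact hg j (by omega)
    _ = _ := by
        rw [sum_range_add]
        congr 1
        · refine sum_congr rfl fun i hi => ?_
          rw [h_left i (mem_range.1 hi).le, h_left (i + 1) (mem_range.1 hi)]
        · refine sum_congr rfl fun i _ => ?_
          rw [h_right, h_step]

lemma chainDist_comm_le (hρ : ∀ x y, ρ x y = ρ y x) (ε : ℝ) (x y : X) :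
    chainDist ρ ε x y ≤ chainDist ρ ε y x := by
  refine le_chainDist fun N f hN hf0 hfN hf => ?_
  have h_rev : ∀ i < N, f (N - i) = f (N - 1 - i + 1) ∧ f (N - (i + 1)) = f (N - 1 - i) :=
    fun i hi => ⟨congrArg f (by omega), congrArg f (by omega)⟩
  calc chainDist ρ ε x y
      ≤ ∑ i ∈ range N, ENNReal.ofReal (ρ (f (N - i)) (f (N - (i + 1)))) := by
        refine chainDist_le_sum hN (by simpa using hfN) (by simpa using hf0) fun i hi => ?_
        rw [(h_rev i hi).1, (h_rev i hi).2, hρ]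
        exact hf _ (by omega)
    _ = ∑ i ∈ range N, ENNReal.ofReal (ρ (f (N - 1 - i + 1)) (f (N - 1 - i))) :=
        sum_congr rfl fun i hi => by rw [(h_rev i (mem_range.1 hi)).1, (h_rev i (mem_range.1 hi)).2]
    _ = ∑ i ∈ range N, ENNReal.ofReal (ρ (f i) (f (i + 1))) := by
        rw [sum_range_reflect (fun j => ENNReal.ofReal (ρ (f (j + 1)) (f j))) N]
        simp_rw [hρ (f (_ + 1))]

lemma chainDist_comm (hρ : ∀ x y, ρ x y = ρ y x) (ε : ℝ) (x y : X) :
    chainDist ρ ε x y = chainDist ρ ε y x :=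
  le_antisymm (chainDist_comm_le hρ ε x y) (chainDist_comm_le hρ ε y x)

end ChainDist

lemma ofReal_dist_le_chainDist {X : Type*} [PseudoMetricSpace X] (ε : ℝ) (x y : X) :
    ENNReal.ofReal (dist x y) ≤ chainDist dist ε x y := by
  refine le_chainDist fun N f _ hf0 hfN _ => ?_
  rw [← ENNReal.ofReal_sum_of_nonneg fun _ _ => dist_nonneg, ← hf0, ← hfN]
  exact ENNReal.ofReal_le_ofReal (dist_le_range_sum_dist f N)

section ChainLimit

variable {X : Type*} {ρ : X → X → ℝ}

noncomputable def chainLimit (ρ : X → X → ℝ) (x y : X) : ℝ≥0∞ :=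
  ⨆ ε ∈ Set.Ioi (0 : ℝ), chainDist ρ ε x y

lemma tendsto_chainDist_chainLimit (ρ : X → X → ℝ) (x y : X) :
    Tendsto (fun ε => chainDist ρ ε x y) (𝓝[>] 0) (𝓝 (chainLimit ρ x y)) := by
  simpa only [chainLimit, sSup_image] using (chainDist_antitone ρ x y).tendsto_nhdsGT 0

lemma chainDist_le_chainLimit {ε : ℝ} (hε : 0 < ε) (x y : X) :
    chainDist ρ ε x y ≤ chainLimit ρ x y :=
  le_iSup₂ (f := fun ε (_ : ε ∈ Set.Ioi 0) => chainDist ρ ε x y) ε hε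

lemma chainLimit_comm (hρ : ∀ x y, ρ x y = ρ y x) (x y : X) :
    chainLimit ρ x y = chainLimit ρ y x := by
  simp only [chainLimit, chainDist_comm hρ _ x y]

lemma chainLimit_triangle (x y z : X) :
    chainLimit ρ x z ≤ chainLimit ρ x y + chainLimit ρ y z :=
  iSup₂_le fun _ hε => (chainDist_triangle ρ _ x y z).trans
    (add_le_add (chainDist_le_chainLimit hε x y) (chainDist_le_chainLimit hε y z))

end ChainLimit

lemma ofReal_dist_le_chainLimit {X : Type*} [PseudoMetricSpace X] (x y : X) :
    ENNReal.ofReal (dist x y) ≤ chainLimit dist x y :=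
  (ofReal_dist_le_chainDist 1 x y).trans (chainDist_le_chainLimit one_pos x y)

section EquivalentDist

variable {X : Type*} {ρ : X → X → ℝ} {C : ℝ}

lemma isMetricDist_of_dist_le [MetricSpace X] (hsymm : ∀ x y, ρ x y = ρ y x)
    (htri : ∀ x y z, ρ x z ≤ ρ x y + ρ y z) (hlo : ∀ x y, dist x y ≤ ρ x y)
    (hhi : ∀ x y, ρ x y ≤ C * dist x y) : IsMetricDist ρ := by
  refine ⟨hsymm, fun x y => ⟨fun h => dist_le_zero.1 (h ▸ hlo x y), ?_⟩, htri⟩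
  rintro rfl
  exact le_antisymm (by simpa using hhi x x) (by simpa using hlo x x)

lemma exists_tendsto_of_dist_le [PseudoMetricSpace X] [CompleteSpace X]
    (hlo : ∀ x y, dist x y ≤ ρ x y) (hhi : ∀ x y, ρ x y ≤ C * dist x y) (u : ℕ → X)
    (hu : ∀ δ : ℝ, 0 < δ → ∃ K : ℕ, ∀ i ≥ K, ∀ j ≥ K, ρ (u i) (u j) < δ) :
    ∃ x, Tendsto (fun i => ρ (u i) x) atTop (𝓝 0) := by
  have hcauchy : CauchySeq u := Metric.cauchySeq_iff.2 fun δ hδ =>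
    (hu δ hδ).imp fun _ hK i hi j hj => (hlo _ _).trans_lt (hK i hi j hj)
  obtain ⟨x, hx⟩ := cauchySeq_tendsto_of_complete hcauchy
  refine ⟨x, squeeze_zero (fun i => dist_nonneg.trans (hlo _ _)) (fun i => hhi _ _) ?_⟩
  simpa using (tendsto_iff_dist_tendsto_zero.1 hx).const_mul C

end EquivalentDist

lemma ProperSpace.of_isCompact_closure_ball {X : Type*} [PseudoMetricSpace X]
    (h : ∀ (x : X) (r : ℝ), IsCompact (closure (ball x r))) : ProperSpace X :=
  ⟨fun x r => (h x (r + 1)).of_isClosed_subset isClosed_closedBall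
    ((closedBall_subset_ball (lt_add_one r)).trans subset_closure)⟩

/-- under the chain condition (with all balls relatively compact),
`ε ↦ d_ε(x,y)` is non-increasing, the limit `ρ(x,y) = lim_{ε↓0} d_ε(x,y)` exists,
`ρ` is a metric with `d ≤ ρ ≤ C d`, and `(X,ρ)` is complete (every `ρ`-Cauchy
sequence `ρ`-converges). -/
theorem chainDist_limit_metric_complete {X : Type*} [MetricSpace X]
    (hrel : ∀ (x : X) (r : ℝ), IsCompact (closure (Metric.ball x r)))
    (C : ℝ) (hC : 1 ≤ C)
    (hchain : ∀ ε : ℝ, 0 < ε → ∀ x y : X,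
      chainDist dist ε x y ≤ ENNReal.ofReal (C * dist x y)) :
    (∀ (x y : X) (ε₁ ε₂ : ℝ), 0 < ε₁ → ε₁ ≤ ε₂ →
      chainDist dist ε₂ x y ≤ chainDist dist ε₁ x y) ∧
    ∃ ρ : X → X → ℝ,
      (∀ x y : X, Filter.Tendsto (fun ε : ℝ => (chainDist dist ε x y).toReal)
        (nhdsWithin 0 (Set.Ioi 0)) (nhds (ρ x y))) ∧
      IsMetricDist ρ ∧
      (∀ x y : X, dist x y ≤ ρ x y ∧ ρ x y ≤ C * dist x y) ∧
      (∀ u : ℕ → X, (∀ δ : ℝ, 0 < δ → ∃ K : ℕ, ∀ i ≥ K, ∀ j ≥ K, ρ (u i) (u j) < δ) →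
        ∃ x : X, Filter.Tendsto (fun i => ρ (u i) x) Filter.atTop (nhds 0)) := by
  have hbound : ∀ x y, chainLimit dist x y ≤ ENNReal.ofReal (C * dist x y) :=
    fun x y => iSup₂_le fun ε hε => hchain ε hε x y
  have hfin : ∀ x y, chainLimit dist x y ≠ ∞ :=
    fun x y => ne_top_of_le_ne_top ofReal_ne_top (hbound x y)
  set ρ : X → X → ℝ := fun x y => (chainLimit dist x y).toReal
  have hlo : ∀ x y, dist x y ≤ ρ x y :=
    fun x y => (ofReal_le_iff_le_toReal (hfin x y)).1 (ofReal_dist_le_chainLimit x y)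
  have hhi : ∀ x y, ρ x y ≤ C * dist x y :=
    fun x y => toReal_le_of_le_ofReal (mul_nonneg (zero_le_one.trans hC) dist_nonneg) (hbound x y)
  have : ProperSpace X := .of_isCompact_closure_ball hrel
  refine ⟨fun x y ε₁ ε₂ _ h => chainDist_antitone dist x y h, ρ,
    fun x y => (tendsto_toReal (hfin x y)).comp (tendsto_chainDist_chainLimit dist x y),
    isMetricDist_of_dist_le (fun x y => congrArg ENNReal.toReal (chainLimit_comm dist_comm x y))
      (fun x y z => toReal_le_add (chainLimit_triangle x y z) (hfin x y) (hfin y z)) hlo hhi,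
    fun x y => ⟨hlo x y, hhi x y⟩, exists_tendsto_of_dist_le hlo hhi⟩
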